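/- Uniform-in-time energy bound: let (x_i, v_i), i = 1, …, n, be a smooth solution of the controlled Cucker-Smale system on [0, T]. Define E(x, v) := (1/(4n))∑_{i,j=1}^n |v_i − v_j|² + E₂(x), where E₂(x) := (M/2)∑_{i=2}^n ∫₀^{|x_{i−1} − x_i − z_{i−1}|²} φ(r) dr, and set E₀ := E(x(0), v(0)). Then E(x(t), v(t)) ≤ E₀ for all 0 ≤ t ≤ T, and in particular max_{1 ≤ i,j ≤ n} |v_i(t) − v_j(t)| ≤ 2√(n E₀). -/

import Mathlib

/-!
Both the alignment force (antisymmetric in `i, j`) and the control (telescoping along the chain)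
have zero total, so the velocity fluctuation changes at rate `∑ᵢ ⟪vᵢ, v̇ᵢ⟫`. Summing by parts, the
control contributes exactly `-dE₂/dt` and the alignment `-D ≤ 0`; hence the energy is
nonincreasing, and `|vᵢ - vⱼ|²` is one term of `∑ₖₗ |vₖ - vₗ|² ≤ 4n · E ≤ 4n · E₀` as `E₂ ≥ 0`.
-/

open scoped BigOperators
open Filter MeasureTheory

noncomputable section

/-- Singular communication weight ψ(r) = r^{-α}. -/
def psiCS (α r : ℝ) : ℝ := r ^ (-α)

/-- Regular communication weight φ(r) = (1+r)^{-β}. -/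
def phiCS (β r : ℝ) : ℝ := (1 + r) ^ (-β)

/-- The decentralized control u_i (agents indexed 1,…,n): for 2 ≤ i ≤ n-1,
`u_i = φ(|x_{i-1}-x_i-z_{i-1}|²)(x_{i-1}-x_i-z_{i-1}) - φ(|x_i-x_{i+1}-z_i|²)(x_i-x_{i+1}-z_i)`,
with only the second term for i = 1 and only the first term for i = n. -/
def uCS {E : Type*} [NormedAddCommGroup E] [NormedSpace ℝ E]
    (n : ℕ) (φ : ℝ → ℝ) (z x : ℕ → E) (i : ℕ) : E :=
  (if 2 ≤ i then φ (‖x (i-1) - x i - z (i-1)‖ ^ 2) • (x (i-1) - x i - z (i-1)) else 0)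
    - (if i + 1 ≤ n then φ (‖x i - x (i+1) - z i‖ ^ 2) • (x i - x (i+1) - z i) else 0)

/-- (x, v) is a solution of the controlled Cucker–Smale system
`x_i' = v_i`, `v_i' = (K/n) ∑_{j≠i} ψ(r_{ij})(v_j - v_i) + M u_i` on the time set S. -/
def IsCSSol {E : Type*} [NormedAddCommGroup E] [NormedSpace ℝ E]
    (n : ℕ) (K M α β : ℝ) (z : ℕ → E) (x v : ℕ → ℝ → E) (S : Set ℝ) : Prop :=
  ∀ i ∈ Finset.Icc 1 n, ∀ t ∈ S,
    HasDerivWithinAt (x i) (v i t) S t ∧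
    HasDerivWithinAt (v i)
      ((K / n) • ∑ j ∈ (Finset.Icc 1 n).erase i,
          psiCS α ‖x j t - x i t‖ • (v j t - v i t)
        + M • uCS n (phiCS β) z (fun k => x k t) i) S t

/-- Potential energy E₂(x) = (M/2) ∑_{i=2}^n ∫₀^{|x_{i-1}-x_i-z_{i-1}|²} φ(r) dr. -/
def E2CS {E : Type*} [NormedAddCommGroup E] [NormedSpace ℝ E]
    (n : ℕ) (M β : ℝ) (z x : ℕ → E) : ℝ :=
  (M / 2) * ∑ i ∈ Finset.Icc 2 n, ∫ r in (0:ℝ)..(‖x (i-1) - x i - z (i-1)‖ ^ 2), phiCS β r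

/-- Kinetic energy E₁(v) = (1/2) ∑ᵢ |vᵢ|². -/
def E1CS {E : Type*} [NormedAddCommGroup E] [NormedSpace ℝ E]
    (n : ℕ) (v : ℕ → E) : ℝ :=
  (1 / 2) * ∑ i ∈ Finset.Icc 1 n, ‖v i‖ ^ 2

/-- Dissipation D(x,v) = (K/(2n)) ∑_{i≠j} ψ(r_{ij}) |v_i - v_j|². -/
def DCS {E : Type*} [NormedAddCommGroup E] [NormedSpace ℝ E]
    (n : ℕ) (K α : ℝ) (x v : ℕ → E) : ℝ :=
  (K / (2 * n)) * ∑ i ∈ Finset.Icc 1 n, ∑ j ∈ (Finset.Icc 1 n).erase i,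
    psiCS α ‖x j - x i‖ * ‖v i - v j‖ ^ 2

/-- Velocity fluctuation (1/(4n)) ∑_{i,j} |v_i - v_j|². -/
def VflCS {E : Type*} [NormedAddCommGroup E] [NormedSpace ℝ E]
    (n : ℕ) (v : ℕ → E) : ℝ :=
  (1 / (4 * n)) * ∑ i ∈ Finset.Icc 1 n, ∑ j ∈ Finset.Icc 1 n, ‖v i - v j‖ ^ 2

open scoped RealInnerProductSpace
open Finset

namespace Finset

lemma sum_sum_erase_comm {ι M : Type*} [DecidableEq ι] [AddCommMonoid M] (s : Finset ι)
    (f : ι → ι → M) :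
    ∑ i ∈ s, ∑ j ∈ s.erase i, f i j = ∑ i ∈ s, ∑ j ∈ s.erase i, f j i := by
  refine sum_comm' fun i j => ?_
  simp only [mem_erase]
  tauto

lemma sum_sum_erase_eq_zero_of_antisymm {ι F : Type*} [DecidableEq ι] [AddCommGroup F]
    [IsAddTorsionFree F] (s : Finset ι) {f : ι → ι → F} (hf : ∀ i j, f j i = -f i j) :
    ∑ i ∈ s, ∑ j ∈ s.erase i, f i j = 0 := by
  refine self_eq_neg.mp ?_
  simp only [← sum_neg_distrib, ← hf]
  exact s.sum_sum_erase_comm f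

lemma sum_sum_inner_sub_sub {ι E : Type*} [NormedAddCommGroup E] [InnerProductSpace ℝ E]
    (s : Finset ι) (V A : ι → E) :
    ∑ i ∈ s, ∑ j ∈ s, ⟪V i - V j, A i - A j⟫ =
      2 * #s * ∑ i ∈ s, ⟪V i, A i⟫ - 2 * ⟪∑ i ∈ s, V i, ∑ i ∈ s, A i⟫ := by
  have hcross : ∑ i ∈ s, ∑ j ∈ s, ⟪V i, A j⟫ = ⟪∑ i ∈ s, V i, ∑ i ∈ s, A i⟫ := by
    rw [sum_inner]; simp only [inner_sum]
  simp only [inner_sub_left, inner_sub_right, sum_sub_distrib, sum_const, nsmul_eq_mul]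
  rw [hcross, sum_comm (f := fun i j => ⟪V j, A i⟫), hcross, ← mul_sum]
  ring

lemma sum_Icc_two_eq_sum_Icc_one_pred {M : Type*} [AddCommMonoid M] (n : ℕ) (g : ℕ → M) :
    ∑ i ∈ Icc 2 n, g i = ∑ k ∈ Icc 1 (n - 1), g (k + 1) := by
  refine sum_nbij' (· - 1) (· + 1) ?_ ?_ ?_ ?_ ?_ <;> simp only [mem_Icc] <;> intro a ha
  all_goals first | omega | congr 1; omega

/-- Summation by parts along the chain: link `k` joins agents `k` and `k + 1`. -/
lemma sum_Icc_ite_pred_sub_ite_succ {F : Type*} [AddCommGroup F] (n : ℕ) (f : ℕ → ℕ → F) :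
    ∑ i ∈ Icc 1 n, ((if 2 ≤ i then f i (i - 1) else 0) - (if i + 1 ≤ n then f i i else 0)) =
      ∑ k ∈ Icc 1 (n - 1), (f (k + 1) k - f k k) := by
  have hpred : (Icc 1 n).filter (2 ≤ ·) = Icc 2 n := by ext; simp only [mem_filter, mem_Icc]; omega
  have hsucc : (Icc 1 n).filter (· + 1 ≤ n) = Icc 1 (n - 1) := by
    ext; simp only [mem_filter, mem_Icc]; omega
  rw [sum_sub_distrib, ← sum_filter, ← sum_filter, hpred, hsucc,
    sum_Icc_two_eq_sum_Icc_one_pred, sum_sub_distrib]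
  simp only [Nat.add_sub_cancel]

end Finset

section Configuration

variable {E : Type*} [NormedAddCommGroup E] [InnerProductSpace ℝ E]

def alignCS (n : ℕ) (α : ℝ) (X V : ℕ → E) (i : ℕ) : E :=
  ∑ j ∈ (Icc 1 n).erase i, psiCS α ‖X j - X i‖ • (V j - V i)

def linkCS (φ : ℝ → ℝ) (z X : ℕ → E) (k : ℕ) : E :=
  φ (‖X k - X (k + 1) - z k‖ ^ 2) • (X k - X (k + 1) - z k)

lemma psiCS_nonneg (α : ℝ) {r : ℝ} (hr : 0 ≤ r) : 0 ≤ psiCS α r :=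
  Real.rpow_nonneg hr _

lemma sum_alignCS (n : ℕ) (α : ℝ) (X V : ℕ → E) : ∑ i ∈ Icc 1 n, alignCS n α X V i = 0 := by
  have : IsAddTorsionFree E := .of_isTorsionFree ℝ E
  exact sum_sum_erase_eq_zero_of_antisymm _ fun i j => by rw [norm_sub_rev, ← smul_neg, neg_sub]

lemma mul_sum_inner_alignCS (n : ℕ) (K α : ℝ) (X V : ℕ → E) :
    K / n * ∑ i ∈ Icc 1 n, ⟪V i, alignCS n α X V i⟫ = -DCS n K α X V := by
  have hpair : ∀ i j, ⟪V i, V j - V i⟫ + ⟪V j, V i - V j⟫ = -‖V i - V j‖ ^ 2 := fun i j => by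
    rw [← real_inner_self_eq_norm_sq]
    simp only [inner_sub_left, inner_sub_right, real_inner_comm (V j) (V i)]
    ring
  have hsym : 2 * ∑ i ∈ Icc 1 n, ⟪V i, alignCS n α X V i⟫ =
      -∑ i ∈ Icc 1 n, ∑ j ∈ (Icc 1 n).erase i, psiCS α ‖X j - X i‖ * ‖V i - V j‖ ^ 2 := by
    simp only [alignCS, inner_sum, real_inner_smul_right]
    rw [two_mul]
    nth_rewrite 2 [sum_sum_erase_comm]
    simp only [← sum_add_distrib, ← sum_neg_distrib]
    refine sum_congr rfl fun i _ => sum_congr rfl fun j _ => ?_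
    rw [norm_sub_rev (X i), ← mul_add, hpair, mul_neg]
  rw [DCS]
  linear_combination K / (2 * n) * hsym

lemma DCS_nonneg (n : ℕ) {K : ℝ} (hK : 0 ≤ K) (α : ℝ) (X V : ℕ → E) : 0 ≤ DCS n K α X V :=
  mul_nonneg (by positivity) <| sum_nonneg fun _ _ => sum_nonneg fun _ _ =>
    mul_nonneg (psiCS_nonneg α (norm_nonneg _)) (sq_nonneg _)

lemma uCS_eq_linkCS (n : ℕ) (φ : ℝ → ℝ) (z X : ℕ → E) (i : ℕ) :
    uCS n φ z X i =
      (if 2 ≤ i then linkCS φ z X (i - 1) else 0) - (if i + 1 ≤ n then linkCS φ z X i else 0) := by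
  by_cases hi : 2 ≤ i
  · simp only [uCS, linkCS, hi, if_true, Nat.sub_add_cancel (by omega : 1 ≤ i)]
  · simp only [uCS, linkCS, hi, if_false]

lemma sum_uCS (n : ℕ) (φ : ℝ → ℝ) (z X : ℕ → E) : ∑ i ∈ Icc 1 n, uCS n φ z X i = 0 := by
  simp only [uCS_eq_linkCS]
  rw [sum_Icc_ite_pred_sub_ite_succ n fun _ k => linkCS φ z X k]
  simp

lemma sum_inner_uCS (n : ℕ) (φ : ℝ → ℝ) (z X V : ℕ → E) :
    ∑ i ∈ Icc 1 n, ⟪V i, uCS n φ z X i⟫ =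
      -∑ k ∈ Icc 1 (n - 1), ⟪linkCS φ z X k, V k - V (k + 1)⟫ := by
  simp only [uCS_eq_linkCS, inner_sub_right, apply_ite (inner ℝ (V _)), inner_zero_right]
  rw [sum_Icc_ite_pred_sub_ite_succ n fun i k => ⟪V i, linkCS φ z X k⟫, ← sum_neg_distrib]
  refine sum_congr rfl fun k _ => ?_
  rw [real_inner_comm (V k), real_inner_comm (V (k + 1))]
  ring

end Configuration

section Energy

lemma phiCS_nonneg (β : ℝ) {r : ℝ} (hr : -1 ≤ r) : 0 ≤ phiCS β r :=
  Real.rpow_nonneg (by linarith) _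

lemma continuousOn_phiCS (β : ℝ) : ContinuousOn (phiCS β) (Set.Ioi (-1)) :=
  ContinuousOn.rpow_const (by fun_prop) fun r hr => Or.inl (by rw [Set.mem_Ioi] at hr; linarith)

lemma hasDerivAt_integral_phiCS (β : ℝ) {y : ℝ} (hy : -1 < y) :
    HasDerivAt (fun b => ∫ r in (0 : ℝ)..b, phiCS β r) (phiCS β y) y := by
  have hsub : Set.uIcc 0 y ⊆ Set.Ioi (-1) := fun r hr => by
    rw [Set.mem_Ioi]
    cases le_total 0 y with
    | inl h => rw [Set.uIcc_of_le h] at hr; linarith [hr.1]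
    | inr h => rw [Set.uIcc_of_ge h] at hr; linarith [hr.1]
  exact intervalIntegral.integral_hasDerivAt_right
    ((continuousOn_phiCS β).mono hsub).intervalIntegrable
    ((continuousOn_phiCS β).stronglyMeasurableAtFilter isOpen_Ioi y hy)
    ((continuousOn_phiCS β).continuousAt (Ioi_mem_nhds hy))

variable {E : Type*} [NormedAddCommGroup E] [InnerProductSpace ℝ E]

lemma HasDerivWithinAt.integral_phiCS_norm_sq (β : ℝ) {w : ℝ → E} {w' : E} {S : Set ℝ} {t : ℝ}
    (hw : HasDerivWithinAt w w' S t) :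
    HasDerivWithinAt (fun τ => ∫ r in (0 : ℝ)..‖w τ‖ ^ 2, phiCS β r)
      (phiCS β (‖w t‖ ^ 2) * (2 * ⟪w t, w'⟫)) S t :=
  (hasDerivAt_integral_phiCS β (by linarith [sq_nonneg ‖w t‖])).comp_hasDerivWithinAt t hw.norm_sq

lemma hasDerivWithinAt_VflCS {n : ℕ} {v : ℕ → ℝ → E} {A : ℕ → E} {S : Set ℝ} {t : ℝ}
    (hv : ∀ i ∈ Icc 1 n, HasDerivWithinAt (v i) (A i) S t) (hA : ∑ i ∈ Icc 1 n, A i = 0) :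
    HasDerivWithinAt (fun τ => VflCS n (v · τ)) (∑ i ∈ Icc 1 n, ⟪v i t, A i⟫) S t := by
  have hderiv : HasDerivWithinAt (fun τ => VflCS n (v · τ))
      (1 / (4 * n) * ∑ i ∈ Icc 1 n, ∑ j ∈ Icc 1 n, 2 * ⟪v i t - v j t, A i - A j⟫) S t :=
    .const_mul _ <| .fun_sum fun i hi => .fun_sum fun j hj => ((hv i hi).sub (hv j hj)).norm_sq
  convert hderiv using 1
  simp only [← mul_sum, sum_sum_inner_sub_sub, hA, inner_zero_right, Nat.card_Icc,
    Nat.add_sub_cancel]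
  rcases Nat.eq_zero_or_pos n with rfl | hn
  · simp
  · field_simp
    ring

lemma hasDerivWithinAt_E2CS {n : ℕ} (M β : ℝ) (z : ℕ → E) {x : ℕ → ℝ → E} {V : ℕ → E}
    {S : Set ℝ} {t : ℝ} (hx : ∀ i ∈ Icc 1 n, HasDerivWithinAt (x i) (V i) S t) :
    HasDerivWithinAt (fun τ => E2CS n M β z (x · τ))
      (M * ∑ k ∈ Icc 1 (n - 1), ⟪linkCS (phiCS β) z (x · t) k, V k - V (k + 1)⟫) S t := by
  have hgap : ∀ i ∈ Icc 2 n, HasDerivWithinAt (fun τ => x (i - 1) τ - x i τ - z (i - 1))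
      (V (i - 1) - V i) S t := fun i hi => by
    rw [mem_Icc] at hi
    exact ((hx _ (mem_Icc.mpr ⟨by omega, by omega⟩)).sub
      (hx _ (mem_Icc.mpr ⟨by omega, hi.2⟩))).sub_const _
  refine ((HasDerivWithinAt.fun_sum fun i hi =>
    (hgap i hi).integral_phiCS_norm_sq β).const_mul (M / 2)).congr_deriv ?_
  rw [sum_Icc_two_eq_sum_Icc_one_pred, mul_sum, mul_sum]
  refine sum_congr rfl fun k _ => ?_
  simp only [linkCS, Nat.add_sub_cancel, real_inner_smul_left]
  ring

variable {n : ℕ} {K M α β : ℝ} {z : ℕ → E} {x v : ℕ → ℝ → E} {S : Set ℝ}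

lemma IsCSSol.hasDerivWithinAt_velocity (hsol : IsCSSol n K M α β z x v S) {i : ℕ}
    (hi : i ∈ Icc 1 n) {t : ℝ} (ht : t ∈ S) :
    HasDerivWithinAt (v i)
      ((K / n) • alignCS n α (x · t) (v · t) i + M • uCS n (phiCS β) z (x · t) i) S t :=
  (hsol i hi t ht).2

/-- The control does work `-dE₂/dt`, so only the alignment dissipation survives. -/
lemma IsCSSol.hasDerivWithinAt_energy (hsol : IsCSSol n K M α β z x v S) {t : ℝ} (ht : t ∈ S) :
    HasDerivWithinAt (fun τ => VflCS n (v · τ) + E2CS n M β z (x · τ))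
      (-DCS n K α (x · t) (v · t)) S t := by
  have hforce : ∑ i ∈ Icc 1 n,
      ((K / n) • alignCS n α (x · t) (v · t) i + M • uCS n (phiCS β) z (x · t) i) = 0 := by
    rw [sum_add_distrib, ← smul_sum, ← smul_sum, sum_alignCS, sum_uCS, smul_zero, smul_zero,
      add_zero]
  have hfluct := hasDerivWithinAt_VflCS (fun i hi => hsol.hasDerivWithinAt_velocity hi ht) hforce
  have hpot := hasDerivWithinAt_E2CS M β z fun i hi => (hsol i hi t ht).1
  refine (hfluct.add hpot).congr_deriv ?_
  simp only [inner_add_right, real_inner_smul_right, sum_add_distrib, ← mul_sum,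
    mul_sum_inner_alignCS, sum_inner_uCS]
  ring

lemma IsCSSol.antitoneOn_energy (hsol : IsCSSol n K M α β z x v S) (hK : 0 ≤ K)
    (hS : Convex ℝ S) : AntitoneOn (fun τ => VflCS n (v · τ) + E2CS n M β z (x · τ)) S :=
  antitoneOn_of_hasDerivWithinAt_nonpos hS
    (fun _ ht => (hsol.hasDerivWithinAt_energy ht).continuousWithinAt)
    (fun _ ht => (hsol.hasDerivWithinAt_energy (interior_subset ht)).mono interior_subset)
    (fun _ _ => neg_nonpos.mpr (DCS_nonneg n hK α _ _))

end Energy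

section Bounds

variable {E : Type*} [NormedAddCommGroup E] [NormedSpace ℝ E]

lemma E2CS_nonneg (n : ℕ) {M : ℝ} (hM : 0 ≤ M) (β : ℝ) (z X : ℕ → E) : 0 ≤ E2CS n M β z X :=
  mul_nonneg (by positivity) <| sum_nonneg fun _ _ =>
    intervalIntegral.integral_nonneg (sq_nonneg _) fun _ hr => phiCS_nonneg β (by linarith [hr.1])

lemma norm_sub_le_two_mul_sqrt_VflCS {n : ℕ} (V : ℕ → E) {i j : ℕ} (hi : i ∈ Icc 1 n)
    (hj : j ∈ Icc 1 n) : ‖V i - V j‖ ≤ 2 * √(n * VflCS n V) := by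
  have hn : (n : ℝ) ≠ 0 := by rw [mem_Icc] at hi; norm_cast; omega
  have hsq : ‖V i - V j‖ ^ 2 ≤ 4 * (n * VflCS n V) :=
    calc ‖V i - V j‖ ^ 2 ≤ ∑ j' ∈ Icc 1 n, ‖V i - V j'‖ ^ 2 :=
          single_le_sum (f := fun j' => ‖V i - V j'‖ ^ 2) (fun _ _ => sq_nonneg _) hj
      _ ≤ ∑ i' ∈ Icc 1 n, ∑ j' ∈ Icc 1 n, ‖V i' - V j'‖ ^ 2 :=
          single_le_sum (f := fun i' => ∑ j' ∈ Icc 1 n, ‖V i' - V j'‖ ^ 2)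
            (fun _ _ => sum_nonneg fun _ _ => sq_nonneg _) hi
      _ = 4 * (n * VflCS n V) := by rw [VflCS]; field_simp
  calc ‖V i - V j‖ = √(‖V i - V j‖ ^ 2) := (Real.sqrt_sq (norm_nonneg _)).symm
    _ ≤ √(2 ^ 2 * (n * VflCS n V)) := Real.sqrt_le_sqrt (by linarith)
    _ = 2 * √(n * VflCS n V) := by rw [Real.sqrt_mul (by norm_num), Real.sqrt_sq (by norm_num)]

end Bounds

theorem cs_energy_bound_general
    {d n : ℕ} (K M α β : ℝ) (hK : 0 ≤ K) (hM : 0 ≤ M)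
    (z : ℕ → EuclideanSpace ℝ (Fin d)) (x v : ℕ → ℝ → EuclideanSpace ℝ (Fin d))
    (T : ℝ)
    (hsol : IsCSSol n K M α β z x v (Set.Icc 0 T)) :
    ∀ t ∈ Set.Icc (0:ℝ) T,
      VflCS n (fun i => v i t) + E2CS n M β z (fun i => x i t)
          ≤ VflCS n (fun i => v i 0) + E2CS n M β z (fun i => x i 0) ∧
      ∀ i ∈ Finset.Icc 1 n, ∀ j ∈ Finset.Icc 1 n,
        ‖v i t - v j t‖
          ≤ 2 * Real.sqrt
              (n * (VflCS n (fun i => v i 0) + E2CS n M β z (fun i => x i 0))) := by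
  intro t ht
  have hdecay := hsol.antitoneOn_energy hK (convex_Icc 0 T) ⟨le_rfl, ht.1.trans ht.2⟩ ht ht.1
  refine ⟨hdecay, fun i hi j hj => ?_⟩
  calc ‖v i t - v j t‖ ≤ 2 * √(n * VflCS n (v · t)) :=
        norm_sub_le_two_mul_sqrt_VflCS (v · t) hi hj
    _ ≤ _ := by
      gcongr
      linarith [E2CS_nonneg n hM β z (x · t)]

/-- uniform-in-time energy bound
`E(x(t),v(t)) ≤ E₀` and `max_{i,j} |v_i(t) - v_j(t)| ≤ 2√(nE₀)`. -/
theorem cs_energy_bound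
    {d n : ℕ} (hn : 2 ≤ n) (K M α β : ℝ) (hK : 0 ≤ K) (hM : 0 ≤ M)
    (hα : 0 < α) (hβ : 0 < β)
    (z : ℕ → EuclideanSpace ℝ (Fin d)) (x v : ℕ → ℝ → EuclideanSpace ℝ (Fin d))
    (T : ℝ) (hT : 0 < T)
    (hsol : IsCSSol n K M α β z x v (Set.Icc 0 T)) :
    ∀ t ∈ Set.Icc (0:ℝ) T,
      VflCS n (fun i => v i t) + E2CS n M β z (fun i => x i t)
          ≤ VflCS n (fun i => v i 0) + E2CS n M β z (fun i => x i 0) ∧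
      ∀ i ∈ Finset.Icc 1 n, ∀ j ∈ Finset.Icc 1 n,
        ‖v i t - v j t‖
          ≤ 2 * Real.sqrt
              (n * (VflCS n (fun i => v i 0) + E2CS n M β z (fun i => x i 0))) :=
  cs_energy_bound_general K M α β hK hM z x v T hsol
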